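/- arXiv:2305.10846 — 7 statements merged into one kernel-verified Lean document; each statement's English description precedes it below -/
import Mathlib

section
/- The ultimate approximator is the most precise approximation: let O : L → 𝒫(L)∖{∅} be a non-deterministic operator on a complete lattice L, and let 𝒪 be any ≼^A_i-monotonic operator with 𝒪(z,z) = (O(z), O(z)) for all z. Then for all x ≤ y in L: 𝒪_l(x,y) ⪯^S O^U_l(x,y) and O^U_l(x,y) ⪯^H 𝒪_u(x,y), where O^U_l(x,y) = ⋃_{x ≤ z ≤ y} O(z). -/
/-! A consistent pair `(z, z)` with `x ≤ z ≤ y` lies above `(x, y)` in the information order, so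
monotonicity of `𝒪` together with `𝒪 (z, z) = (O z, O z)` compares `𝒪 (x, y)` with each `O z`;
both orders are compatible with unions, which gives the comparison with `⋃ z, O z`. -/

def smyth {L : Type*} [Lattice L] (X Y : Set L) : Prop :=
  ∀ y ∈ Y, ∃ x ∈ X, x ≤ y

def hoare {L : Type*} [Lattice L] (X Y : Set L) : Prop :=
  ∀ x ∈ X, ∃ y ∈ Y, x ≤ y

def ultL {L : Type*} [CompleteLattice L] (O : L → Set L) (x y : L) : Set L :=
  ⋃ z ∈ {z : L | x ≤ z ∧ z ≤ y}, O z

section UnionCompat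

variable {L ι : Type*} [Lattice L] {s : Set ι}

theorem smyth_biUnion_iff {X : Set L} {Y : ι → Set L} :
    smyth X (⋃ i ∈ s, Y i) ↔ ∀ i ∈ s, smyth X (Y i) := by
  simp only [smyth, Set.mem_iUnion₂]
  exact ⟨fun h i hi y hy => h y ⟨i, hi, hy⟩, fun h y ⟨i, hi, hy⟩ => h i hi y hy⟩

theorem hoare_biUnion_iff {X : ι → Set L} {Y : Set L} :
    hoare (⋃ i ∈ s, X i) Y ↔ ∀ i ∈ s, hoare (X i) Y := by
  simp only [hoare, Set.mem_iUnion₂]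
  exact ⟨fun h i hi x hx => h x ⟨i, hi, hx⟩, fun h x ⟨i, hi, hx⟩ => h i hi x hx⟩

end UnionCompat

theorem ultimate_most_precise_general {L : Type*} [CompleteLattice L]
    (O : L → Set L)
    (𝒪 : L × L → Set L × Set L)
    (hmono : ∀ x₁ y₁ x₂ y₂ : L, x₁ ≤ x₂ → y₂ ≤ y₁ →
      smyth (𝒪 (x₁, y₁)).1 (𝒪 (x₂, y₂)).1 ∧ hoare (𝒪 (x₂, y₂)).2 (𝒪 (x₁, y₁)).2)
    (hexact : ∀ z : L, 𝒪 (z, z) = (O z, O z)) :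
    ∀ x y : L, x ≤ y →
      smyth (𝒪 (x, y)).1 (ultL O x y) ∧ hoare (ultL O x y) (𝒪 (x, y)).2 := by
  intro x y _
  rw [ultL, smyth_biUnion_iff, hoare_biUnion_iff]
  have hcompare (z : L) (hz : x ≤ z ∧ z ≤ y) :
      smyth (𝒪 (x, y)).1 (O z) ∧ hoare (O z) (𝒪 (x, y)).2 := by
    simpa only [hexact] using hmono x y z z hz.1 hz.2
  exact ⟨fun z hz => (hcompare z hz).1, fun z hz => (hcompare z hz).2⟩

theorem ultimate_most_precise {L : Type*} [CompleteLattice L]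
    (O : L → Set L) (hO : ∀ z, (O z).Nonempty)
    (𝒪 : L × L → Set L × Set L)
    (hmono : ∀ x₁ y₁ x₂ y₂ : L, x₁ ≤ x₂ → y₂ ≤ y₁ →
      smyth (𝒪 (x₁, y₁)).1 (𝒪 (x₂, y₂)).1 ∧ hoare (𝒪 (x₂, y₂)).2 (𝒪 (x₁, y₁)).2)
    (hexact : ∀ z : L, 𝒪 (z, z) = (O z, O z)) :
    ∀ x y : L, x ≤ y →
      smyth (𝒪 (x, y)).1 (ultL O x y) ∧ hoare (ultL O x y) (𝒪 (x, y)).2 :=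
  ultimate_most_precise_general O 𝒪 hmono hexact
end

section
/- Every ≤-minimal pre-fixpoint of a ⪯^S-monotonic non-deterministic operator is a ≤-minimal fixpoint: let O : L → 𝒫(L)∖{∅} on a lattice L satisfy x ≤ y implies O(x) ⪯^S O(y). If w is ≤-minimal among elements z with O(z) ⪯^S {z}, then w ∈ O(w) (that is, there exists w' ∈ O(w) with w' = w); moreover w is ≤-minimal among fixpoints (elements z with z ∈ O(z)). -/
theorem minimal_prefixpoint_is_minimal_fixpoint {L : Type*} [Lattice L]
    (O : L → Set L) (hne : ∀ z, (O z).Nonempty)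
    (hmono : ∀ x y : L, x ≤ y → smyth (O x) (O y))
    (w : L) (hpre : ∃ u ∈ O w, u ≤ w)
    (hmin : ∀ z : L, (∃ u ∈ O z, u ≤ z) → ¬ z < w) :
    (∃ w' ∈ O w, w' = w) ∧ ∀ z : L, z ∈ O z → ¬ z < w := by
  obtain ⟨u, huO, huw⟩ := hpre
  obtain ⟨v, hvO, hvu⟩ := hmono u w huw u huO
  have hupre : ∃ x ∈ O u, x ≤ u := ⟨v, hvO, hvu⟩
  have huw' : u = w := by
    rcases eq_or_lt_of_le huw with h | h
    · exact h
    · exact absurd h (hmin u hupre)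
  exact ⟨⟨u, huO, huw'⟩, fun z hz => hmin z ⟨z, hz, le_rfl⟩⟩
end

section
/- Every three-valued model of a disjunctively normal logic program is an HT-model, but not conversely: for the single-rule program P = {b ← ¬c} over atoms {b,c}, the pair (∅,{c}) is an HT-model of P but not a three-valued model of P. -/
structure Rule (A : Type*) where
  head : Set A
  pos : Set A
  neg : Set A
  hne : head.Nonempty

/-- `(x,y)` is a three-valued model: for every rule, the four-valued truth value of
the head is `≥_t` that of the body (unfolded for consistent pairs). -/
def threeModel {A : Type*} (P : Set (Rule A)) (x y : Set A) : Prop :=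
  ∀ r ∈ P,
    ((r.pos ⊆ x ∧ ∀ b ∈ r.neg, b ∉ y) → (x ∩ r.head).Nonempty) ∧
    ((r.pos ⊆ y ∧ ∀ b ∈ r.neg, b ∉ x) → (y ∩ r.head).Nonempty)

/-- `(x,y)` is an HT-model. -/
def htModel {A : Type*} (P : Set (Rule A)) (x y : Set A) : Prop :=
  ∀ r ∈ P,
    ((r.pos ⊆ x ∧ ∀ b ∈ r.neg, b ∉ y) → (x ∩ r.head).Nonempty) ∧
    ((r.pos ⊆ y ∧ ∀ b ∈ r.neg, b ∉ y) → (y ∩ r.head).Nonempty)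

/-! The two notions differ only in the premise of their second clause: a three-valued model
must support the head whenever the negative body avoids `x`, an HT-model only when it avoids
`y`. For `x ⊆ y` the latter premise is the stronger one. In the counterexample (`b` is `0`,
`c` is `1`) the atom `c` is undefined in `(∅, {c})`, so the body `¬c` is undefined while the
head `b` is false: the HT conditions hold vacuously, the three-valued one fails. -/

section

variable {A : Type*} {P : Set (Rule A)} {x y : Set A}

theorem htModel_of_threeModel (hxy : x ⊆ y) (h : threeModel P x y) : htModel P x y :=
  fun r hr => ⟨(h r hr).1, fun ⟨hpos, hneg⟩ =>
    (h r hr).2 ⟨hpos, fun b hb hbx => hneg b hb (hxy hbx)⟩⟩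

theorem htModel_of_forall_neg_meets (h : ∀ r ∈ P, ∃ b ∈ r.neg, b ∈ y) : htModel P x y := by
  intro r hr
  obtain ⟨b, hb, hby⟩ := h r hr
  exact ⟨fun ⟨_, hneg⟩ => absurd hby (hneg b hb), fun ⟨_, hneg⟩ => absurd hby (hneg b hb)⟩

theorem not_threeModel_of_mem {r : Rule A} (hr : r ∈ P) (hpos : r.pos ⊆ y)
    (hneg : ∀ b ∈ r.neg, b ∉ x) (hhead : ∀ a ∈ r.head, a ∉ y) : ¬ threeModel P x y :=
  fun h => by
    obtain ⟨a, hay, har⟩ := (h r hr).2 ⟨hpos, hneg⟩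
    exact hhead a har hay

end

theorem threeValued_models_are_HT_but_not_conversely :
    (∀ (A : Type) (P : Set (Rule A)) (x y : Set A), x ⊆ y →
      threeModel P x y → htModel P x y) ∧
    (htModel ({⟨{0}, ∅, {1}, ⟨0, rfl⟩⟩} : Set (Rule ℕ)) ∅ {1} ∧
     ¬ threeModel ({⟨{0}, ∅, {1}, ⟨0, rfl⟩⟩} : Set (Rule ℕ)) ∅ {1}) := by
  refine ⟨fun _ _ _ _ => htModel_of_threeModel, ?_, ?_⟩
  · refine htModel_of_forall_neg_meets ?_
    rintro r rfl
    exact ⟨1, rfl, rfl⟩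
  · refine not_threeModel_of_mem rfl (Set.empty_subset _) (fun _ _ => id) ?_
    rintro a rfl
    exact zero_ne_one
end

section
/- Characterization of HT-pairs for the disjunctive consequence ndao: for a disjunctively normal program P and consistent pair (x,y), the condition IC^l_P(x,y) ⪯^S {x} holds if and only if for every rule ⋁Δ ← ⋀Θ₁ ∧ ⋀{¬β | β ∈ Θ₂} in P, whenever Θ₁ ⊆ x and Θ₂ ∩ y = ∅, we have x ∩ Δ ≠ ∅. -/
def HDl {A : Type*} (P : Set (Rule A)) (x y : Set A) : Set (Set A) :=
  {Δ | ∃ r ∈ P, r.head = Δ ∧ r.pos ⊆ x ∧ ∀ b ∈ r.neg, b ∉ y}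

def ICl {A : Type*} (P : Set (Rule A)) (x y : Set A) : Set (Set A) :=
  {z | z ⊆ ⋃₀ HDl P x y ∧ ∀ Δ ∈ HDl P x y, (z ∩ Δ).Nonempty}

section

variable {A : Type*} {P : Set (Rule A)} {x y : Set A}

theorem head_mem_HDl {r : Rule A} (hr : r ∈ P) (hpos : r.pos ⊆ x) (hneg : ∀ b ∈ r.neg, b ∉ y) :
    r.head ∈ HDl P x y :=
  ⟨r, hr, rfl, hpos, hneg⟩

theorem inter_sUnion_HDl_mem_ICl {s : Set A} (hs : ∀ Δ ∈ HDl P x y, (s ∩ Δ).Nonempty) :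
    s ∩ ⋃₀ HDl P x y ∈ ICl P x y := by
  refine ⟨Set.inter_subset_right, fun Δ hΔ => ?_⟩
  obtain ⟨a, has, haΔ⟩ := hs Δ hΔ
  exact ⟨a, ⟨has, Δ, hΔ, haΔ⟩, haΔ⟩

theorem exists_mem_ICl_subset_iff (s : Set A) :
    (∃ w ∈ ICl P x y, w ⊆ s) ↔ ∀ Δ ∈ HDl P x y, (s ∩ Δ).Nonempty := by
  constructor
  · rintro ⟨w, ⟨-, hw⟩, hws⟩ Δ hΔ
    exact (hw Δ hΔ).mono (Set.inter_subset_inter_left Δ hws)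
  · intro hs
    exact ⟨_, inter_sUnion_HDl_mem_ICl hs, Set.inter_subset_left⟩

end

theorem ht_pair_characterization_general {A : Type*} (P : Set (Rule A))
    (x y : Set A) :
    (∃ w ∈ ICl P x y, w ⊆ x) ↔
      ∀ r ∈ P, r.pos ⊆ x → (∀ b ∈ r.neg, b ∉ y) → (x ∩ r.head).Nonempty := by
  rw [exists_mem_ICl_subset_iff]
  constructor
  · intro h r hr hpos hneg
    exact h r.head (head_mem_HDl hr hpos hneg)
  · rintro h _ ⟨r, hr, rfl, hpos, hneg⟩
    exact h r hr hpos hneg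

theorem ht_pair_characterization {A : Type*} (P : Set (Rule A)) (hP : P.Finite)
    (hfin : ∀ r ∈ P, r.head.Finite ∧ r.pos.Finite ∧ r.neg.Finite)
    (x y : Set A) (hxy : x ⊆ y) :
    (∃ w ∈ ICl P x y, w ⊆ x) ↔
      ∀ r ∈ P, r.pos ⊆ x → (∀ b ∈ r.neg, b ∉ y) → (x ∩ r.head).Nonempty :=
  ht_pair_characterization_general P x y
end

section
/- The trivial (GZ) approximator is an ndao: for a map IC : 𝒫(A) → 𝒫(𝒫(A))∖{∅} on a finite set of atoms A, define 𝒪(x,y) = (IC(x), IC(x)) if x = y and 𝒪(x,y) = ({∅}, {A}) otherwise (for x ⊆ y ⊆ A). Then 𝒪 is ≼^A_i-monotonic on consistent pairs and exact, hence an ndao approximating IC. -/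
/-! On the diagonal 𝒪 is `IC x` on both sides, which gives exactness. Off the diagonal its lower
part contains `∅ = ⊥` and its upper part `A = ⊤`, so both orders hold trivially whenever the
smaller pair is off the diagonal; and if `x₁ = y₁`, the chain `x₁ ⊆ x₂ ⊆ y₂ ⊆ y₁` collapses, so
both pairs are the same point of the diagonal and the orders hold by reflexivity. -/

open scoped Classical

noncomputable def GZl {A : Type*} (IC : Set A → Set (Set A)) (x y : Set A) :
    Set (Set A) :=
  if x = y then IC x else {∅}

noncomputable def GZu {A : Type*} (IC : Set A → Set (Set A)) (x y : Set A) :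
    Set (Set A) :=
  if x = y then IC x else {Set.univ}

section PowerdomainOrders

variable {L : Type*} [Lattice L]

theorem smyth_refl (X : Set L) : smyth X X :=
  fun y hy => ⟨y, hy, le_rfl⟩

theorem hoare_refl (X : Set L) : hoare X X :=
  fun x hx => ⟨x, hx, le_rfl⟩

theorem smyth_of_bot_mem [OrderBot L] {X : Set L} (Y : Set L) (h : ⊥ ∈ X) : smyth X Y :=
  fun _ _ => ⟨⊥, h, bot_le⟩

theorem hoare_of_top_mem [OrderTop L] (X : Set L) {Y : Set L} (h : ⊤ ∈ Y) : hoare X Y :=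
  fun _ _ => ⟨⊤, h, le_top⟩

end PowerdomainOrders

section GZ

variable {A : Type*} (IC : Set A → Set (Set A))

theorem GZl_self (x : Set A) : GZl IC x x = IC x :=
  if_pos rfl

theorem GZu_self (x : Set A) : GZu IC x x = IC x :=
  if_pos rfl

theorem bot_mem_GZl_of_ne {x y : Set A} (h : x ≠ y) : ⊥ ∈ GZl IC x y := by
  simp [GZl, h]

theorem top_mem_GZu_of_ne {x y : Set A} (h : x ≠ y) : ⊤ ∈ GZu IC x y := by
  simp [GZu, h]

end GZ

theorem GZ_is_ndao_general {A : Type*} (IC : Set A → Set (Set A)) :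
    (∀ x₁ y₁ x₂ y₂ : Set A, x₁ ⊆ y₁ → x₂ ⊆ y₂ → x₁ ⊆ x₂ → y₂ ⊆ y₁ →
      smyth (GZl IC x₁ y₁) (GZl IC x₂ y₂) ∧ hoare (GZu IC x₂ y₂) (GZu IC x₁ y₁)) ∧
    (∀ x : Set A, GZl IC x x = IC x ∧ GZu IC x x = IC x) := by
  refine ⟨fun x₁ y₁ x₂ y₂ _ h₂ hx hy => ?_, fun x => ⟨GZl_self IC x, GZu_self IC x⟩⟩
  by_cases hxy : x₁ = y₁
  · subst hxy
    obtain ⟨rfl, rfl⟩ : x₁ = x₂ ∧ x₂ = y₂ :=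
      ⟨hx.antisymm (h₂.trans hy), h₂.antisymm (hy.trans hx)⟩
    exact ⟨smyth_refl _, hoare_refl _⟩
  · exact ⟨smyth_of_bot_mem _ (bot_mem_GZl_of_ne IC hxy),
      hoare_of_top_mem _ (top_mem_GZu_of_ne IC hxy)⟩

theorem GZ_is_ndao {A : Type*} [Fintype A] (IC : Set A → Set (Set A))
    (hne : ∀ z : Set A, (IC z).Nonempty) :
    (∀ x₁ y₁ x₂ y₂ : Set A, x₁ ⊆ y₁ → x₂ ⊆ y₂ → x₁ ⊆ x₂ → y₂ ⊆ y₁ →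
      smyth (GZl IC x₁ y₁) (GZl IC x₂ y₂) ∧ hoare (GZu IC x₂ y₂) (GZu IC x₁ y₁)) ∧
    (∀ x : Set A, GZl IC x x = IC x ∧ GZu IC x x = IC x) :=
  GZ_is_ndao_general IC
end

section
/- The DMT ndao for disjunctive programs is upwards coherent: for any disjunctive aggregate program P and any x ⊆ y ⊆ A, HD^{DMT,l}_P(x,y) ⊆ HD^{DMT,u}_P(x,y), and consequently IC^{DMT,l}_P(x,y) ⪯^S IC^{DMT,u}_P(x,y): for every z ∈ IC^{DMT,u}_P(x,y), the set z ∩ ⋃HD^{DMT,l}_P(x,y) belongs to IC^{DMT,l}_P(x,y) and is ⊆ z. -/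
def HDdmtL {A : Type*} (HD : Set A → Set (Set A)) (x y : Set A) : Set (Set A) :=
  {Δ | ∀ z : Set A, x ⊆ z → z ⊆ y → Δ ∈ HD z}

def HDdmtU {A : Type*} (HD : Set A → Set (Set A)) (x y : Set A) : Set (Set A) :=
  {Δ | ∃ z : Set A, x ⊆ z ∧ z ⊆ y ∧ Δ ∈ HD z}

def ICd {A : Type*} (H : Set (Set A)) : Set (Set A) :=
  {w | w ⊆ ⋃₀ H ∧ ∀ Δ ∈ H, (w ∩ Δ).Nonempty}

theorem HDdmtL_subset_HDdmtU {A : Type*} (HD : Set A → Set (Set A)) {x y : Set A}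
    (hxy : x ⊆ y) : HDdmtL HD x y ⊆ HDdmtU HD x y :=
  fun _ hΔ => ⟨x, subset_rfl, hxy, hΔ x subset_rfl hxy⟩

theorem inter_sUnion_mem_ICd_of_subset {A : Type*} {H K : Set (Set A)} (hHK : H ⊆ K)
    {w : Set A} (hw : w ∈ ICd K) : w ∩ ⋃₀ H ∈ ICd H := by
  refine ⟨Set.inter_subset_right, fun Δ hΔ => ?_⟩
  obtain ⟨a, haw, haΔ⟩ := hw.2 Δ (hHK hΔ)
  exact ⟨a, ⟨haw, Δ, hΔ, haΔ⟩, haΔ⟩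

theorem smyth_ICd_of_subset {A : Type*} {H K : Set (Set A)} (hHK : H ⊆ K) :
    smyth (ICd H) (ICd K) :=
  fun w hw => ⟨w ∩ ⋃₀ H, inter_sUnion_mem_ICd_of_subset hHK hw, Set.inter_subset_left⟩

theorem DMT_upwards_coherent_general {A : Type*}
    (HD : Set A → Set (Set A)) (x y : Set A) (hxy : x ⊆ y) :
    HDdmtL HD x y ⊆ HDdmtU HD x y ∧
    (∀ w ∈ ICd (HDdmtU HD x y),
      w ∩ ⋃₀ HDdmtL HD x y ∈ ICd (HDdmtL HD x y) ∧ w ∩ ⋃₀ HDdmtL HD x y ⊆ w) ∧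
    smyth (ICd (HDdmtL HD x y)) (ICd (HDdmtU HD x y)) := by
  have hsub := HDdmtL_subset_HDdmtU HD hxy
  exact ⟨hsub, fun _ hw => ⟨inter_sUnion_mem_ICd_of_subset hsub hw, Set.inter_subset_left⟩,
    smyth_ICd_of_subset hsub⟩

theorem DMT_upwards_coherent {A : Type*} [Fintype A]
    (HD : Set A → Set (Set A)) (x y : Set A) (hxy : x ⊆ y) :
    HDdmtL HD x y ⊆ HDdmtU HD x y ∧
    (∀ w ∈ ICd (HDdmtU HD x y),
      w ∩ ⋃₀ HDdmtL HD x y ∈ ICd (HDdmtL HD x y) ∧ w ∩ ⋃₀ HDdmtL HD x y ⊆ w) ∧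
    smyth (ICd (HDdmtL HD x y)) (ICd (HDdmtU HD x y)) :=
  DMT_upwards_coherent_general HD x y hxy
end

section
/- Downward closed ⪯^S-monotonic non-deterministic operators have minimal fixpoints on finite lattices: let L be a finite lattice and O : L → 𝒫(L)∖{∅} be ⪯^S-monotonic (x ≤ y implies O(x) ⪯^S O(y)). Then O has a ≤-minimal fixpoint, i.e., there is a ≤-minimal element x with x ∈ O(x), provided O(⊤) ⪯^S {⊤} (the top is a pre-fixpoint). In particular, since O(⊤) is nonempty and contained in L with ⊤ the top, O(⊤) ⪯^S {⊤} always holds, so a minimal fixpoint always exists. -/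
section

variable {L : Type*} [Lattice L] (O : L → Set L)

def IsPreFixpoint (z : L) : Prop :=
  ∃ u ∈ O z, u ≤ z

def IsFixpoint (z : L) : Prop :=
  z ∈ O z

variable {O}

lemma IsFixpoint.isPreFixpoint {z : L} (hz : IsFixpoint O z) : IsPreFixpoint O z :=
  ⟨z, hz, le_rfl⟩

lemma isPreFixpoint_of_mem_of_le (hmono : ∀ x y : L, x ≤ y → smyth (O x) (O y))
    {x u : L} (hu : u ∈ O x) (hux : u ≤ x) : IsPreFixpoint O u :=
  hmono u x hux u hu

lemma Minimal.isFixpoint_of_isPreFixpoint (hmono : ∀ x y : L, x ≤ y → smyth (O x) (O y))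
    {x : L} (hx : Minimal (IsPreFixpoint O) x) : Minimal (IsFixpoint O) x := by
  obtain ⟨u, hu, hux⟩ := hx.prop
  have hux_eq : u = x := hx.eq_of_le (isPreFixpoint_of_mem_of_le hmono hu hux) hux
  exact hx.mono (fun _ hz => hz.isPreFixpoint) (hux_eq ▸ hu)

end

theorem minimal_fixpoint_exists_finite {L : Type*} [CompleteLattice L] [Finite L]
    (O : L → Set L) (hne : ∀ z : L, (O z).Nonempty)
    (hmono : ∀ x y : L, x ≤ y → smyth (O x) (O y)) :
    (∃ u ∈ O ⊤, u ≤ ⊤) ∧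
    ∃ x : L, x ∈ O x ∧ ∀ z : L, z ∈ O z → ¬ z < x := by
  obtain ⟨u, hu⟩ := hne ⊤
  have htop : IsPreFixpoint O ⊤ := ⟨u, hu, le_top⟩
  obtain ⟨x, -, hx⟩ := exists_minimal_le_of_wellFoundedLT (IsPreFixpoint O) ⊤ htop
  have hfix : Minimal (IsFixpoint O) x := hx.isFixpoint_of_isPreFixpoint hmono
  exact ⟨htop, x, hfix.prop, fun z hz => hfix.not_lt hz⟩
end
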